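/- arXiv:1711.08287 — 2 statements merged into one kernel-verified Lean document; each statement's English description precedes it below -/
import Mathlib

section
/- For a point x ∈ ℍ^{n+1} and a round ball B ⊂ Sⁿ = ∂ℍ^{n+1}, if the hyperbolic distance from x to the convex hull Dome(B) is at least 1, then the visual diameter of B as seen from x satisfies diam_x(B) < π/2. -/
open scoped RealInnerProductSpace ENNReal NNReal Manifold
open MeasureTheory Metric Set Filter

noncomputable section

/-- Inverse hyperbolic cosine. -/
def arcosh (t : ℝ) : ℝ := Real.log (t + Real.sqrt (t ^ 2 - 1))

/-- Euclidean space `ℝ^{n+1}`, the ambient space of the Klein model of `ℍ^{n+1}`,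
whose underlying set is the open unit ball. -/
abbrev Ep (n : ℕ) := EuclideanSpace ℝ (Fin (n + 1))

/-- The sphere `Sⁿ`, the boundary at infinity of `ℍ^{n+1}`. -/
abbrev Sph (n : ℕ) := Metric.sphere (0 : Ep n) 1

instance (n : ℕ) : Fact (Module.finrank ℝ (Ep n) = n + 1) :=
  ⟨finrank_euclideanSpace_fin⟩

/-- Hyperbolic distance in the Klein model (for points in the open unit ball). -/
def hypDist (n : ℕ) (x y : Ep n) : ℝ :=
  arcosh ((1 - ⟪x, y⟫) / Real.sqrt ((1 - ‖x‖ ^ 2) * (1 - ‖y‖ ^ 2)))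

/-- Busemann function `B_o(x,θ)` normalized at the basepoint `o = 0` (Klein model). -/
def buse (n : ℕ) (x θ : Ep n) : ℝ :=
  Real.log ((1 - ⟪x, θ⟫) / Real.sqrt (1 - ‖x‖ ^ 2))

/-- Hyperbolic convex hull (the "dome") of a subset of the closed unit ball; in the
Klein model, geodesics are straight segments, so hyperbolic convex hulls are
Euclidean convex hulls intersected with the open ball. -/
def dome (n : ℕ) (X : Set (Ep n)) : Set (Ep n) := convexHull ℝ X ∩ ball 0 1

/-- A subset of `Sⁿ` viewed as a subset of the ambient `ℝ^{n+1}`. -/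
def sphSet (n : ℕ) (X : Set (Sph n)) : Set (Ep n) := Subtype.val '' X

/-- Spherical (angular) distance on `Sⁿ`, i.e. the visual metric at the basepoint. -/
def sphDist (n : ℕ) (θ η : Sph n) : ℝ := Real.arccos ⟪(θ : Ep n), (η : Ep n)⟫

/-- Round ball in `Sⁿ` with center `θ` and (angular) radius `r`. -/
def roundBall (n : ℕ) (θ : Sph n) (r : ℝ) : Set (Sph n) := {η | sphDist n θ η < r}

/-- Round annulus in `Sⁿ` with center `θ` and radii `r < R`. -/
def roundAnnulus (n : ℕ) (θ : Sph n) (r R : ℝ) : Set (Sph n) :=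
  {η | r < sphDist n θ η ∧ sphDist n θ η < R}

/-- The Klein-model Riemannian metric as a bilinear pairing of tangent vectors
`u v` at the point `x` (up to the conformal factor `(1-‖x‖²)⁻²`). -/
def kbil (n : ℕ) (x u v : Ep n) : ℝ :=
  ⟪u, v⟫ * (1 - ‖x‖ ^ 2) + ⟪x, u⟫ * ⟪x, v⟫

/-- Squared hyperbolic norm of a tangent vector `u` at `x` in the Klein model. -/
def qf (n : ℕ) (x u : Ep n) : ℝ := kbil n x u u / (1 - ‖x‖ ^ 2) ^ 2

/-- The visual metric `d_x` on `Sⁿ`: the hyperbolic angle at `x` between the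
geodesic rays (straight segments in the Klein model) from `x` to `θ` and `η`. -/
def visualDist (n : ℕ) (x : Ep n) (θ η : Sph n) : ℝ :=
  Real.arccos (kbil n x ((θ : Ep n) - x) ((η : Ep n) - x) /
    (Real.sqrt (kbil n x ((θ : Ep n) - x) ((θ : Ep n) - x)) *
      Real.sqrt (kbil n x ((η : Ep n) - x) ((η : Ep n) - x))))

/-- Diameter of a subset of `Sⁿ` with respect to the visual metric `d_x`. -/
def visualDiam (n : ℕ) (x : Ep n) (X : Set (Sph n)) : ℝ :=
  sSup {r | ∃ θ ∈ X, ∃ η ∈ X, r = visualDist n x θ η}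

/-- The (unnormalized) spherical surface measure on `Sⁿ`. -/
def sphereVol (n : ℕ) : Measure (Sph n) := (volume : Measure (Ep n)).toSphere

/-- The normalized (probability) spherical measure on `Sⁿ`. -/
def probSphere (n : ℕ) : Measure (Sph n) := (sphereVol n Set.univ)⁻¹ • sphereVol n

/-- The visual probability measure `vol_x` of `x ∈ ℍ^{n+1}`, given by its density
`e^{-n B_o(x,θ)}` with respect to the normalized spherical measure; it is the unique
probability measure on `Sⁿ` invariant under the isometries fixing `x`. -/
def visualVol (n : ℕ) (x : Ep n) : Measure (Sph n) :=
  (probSphere n).withDensity fun θ => ENNReal.ofReal (Real.exp (-(n : ℝ) * buse n x θ))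

/-- `y` is the barycenter `BCG(μ)` of a measure `μ` on `Sⁿ = ∂ℍ^{n+1}`: the point of
hyperbolic space minimizing the total Busemann integral `z ↦ ∫ B_o(z,θ) dμ(θ)`
(for atomless `μ` this minimizer exists and is unique). -/
def IsBarycenter (n : ℕ) (μ : Measure (Sph n)) (y : Ep n) : Prop :=
  y ∈ ball (0 : Ep n) 1 ∧
    IsMinOn (fun z => ∫ θ, buse n z (θ : Ep n) ∂μ) (ball (0 : Ep n) 1) y

/-- The Besson–Courtois–Gallot barycentric extension `F_f` of `f : Sⁿ → Sⁿ`: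
`F_f(x)` is the barycenter of the pushforward under `f` of the visual measure at `x`. -/
def bcgExt (n : ℕ) (f : Sph n → Sph n) (x : Ep n) : Ep n :=
  Classical.epsilon (IsBarycenter n (Measure.map f (visualVol n x)))

/-- The surface measure `ω_{n-1}` of the unit sphere `S^{n-1} ⊂ ℝⁿ`. -/
def omegaS (n : ℕ) : ℝ := n * (volume (ball (0 : EuclideanSpace ℝ (Fin n)) 1)).toReal

/-- The derivative of `f : Sⁿ → Sⁿ` at `θ`, in the (conformal) stereographic charts. -/
def sphDeriv (n : ℕ) (f : Sph n → Sph n) (θ : Sph n) :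
    EuclideanSpace ℝ (Fin n) →L[ℝ] EuclideanSpace ℝ (Fin n) :=
  mfderiv (𝓡 n) (𝓡 n) f θ

/-- `f` is continuous, a.e. differentiable, and satisfies the outer distortion
inequality `‖Df‖ⁿ ≤ K det Df` almost everywhere: the quasiregularity condition. -/
def IsQROuter (n : ℕ) (K : ℝ) (f : Sph n → Sph n) : Prop :=
  Continuous f ∧ ∀ᵐ θ ∂sphereVol n, MDifferentiableAt (𝓡 n) (𝓡 n) f θ ∧
    ‖sphDeriv n f θ‖ ^ n ≤ K * LinearMap.det (sphDeriv n f θ).toLinearMap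

/-- The inner distortion inequality `det Df ≤ K · min_{|v|=1} |Df v|ⁿ` a.e. -/
def IsQRInner (n : ℕ) (K : ℝ) (f : Sph n → Sph n) : Prop :=
  ∀ᵐ θ ∂sphereVol n, LinearMap.det (sphDeriv n f θ).toLinearMap ≤
    K * sInf {r | ∃ v : EuclideanSpace ℝ (Fin n), ‖v‖ = 1 ∧ r = ‖sphDeriv n f θ v‖ ^ n}

/-- `f` is `K`-quasiregular: its distortion `K(f) = max(K_O(f), K_I(f))` is at most `K`. -/
def IsQR (n : ℕ) (K : ℝ) (f : Sph n → Sph n) : Prop :=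
  IsQROuter n K f ∧ IsQRInner n K f

/-- `f` has (topological) degree `d`, expressed through the change of variables
formula `∫ J_f = d · vol(Sⁿ)`, valid for quasiregular maps. -/
def HasDeg (n : ℕ) (f : Sph n → Sph n) (d : ℝ) : Prop :=
  ∫ θ, LinearMap.det (sphDeriv n f θ).toLinearMap ∂sphereVol n =
    d * (sphereVol n Set.univ).toReal

/-- `f` has degree at most `d`. -/
def DegLE (n : ℕ) (f : Sph n → Sph n) (d : ℕ) : Prop := ∃ k : ℕ, k ≤ d ∧ HasDeg n f k

/-- `f` is a non-constant map. -/
def Nonconstant (n : ℕ) (f : Sph n → Sph n) : Prop := ¬ ∃ c, f = fun _ => c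

/-- Admissible density for a curve family on `Sⁿ`: a measurable `ρ` whose line
integral along each (locally rectifiable) curve of `Γ` is at least `1`. -/
def SphAdmissible (n : ℕ) (ρ : Sph n → ℝ≥0∞) (Γ : Set (ℝ → Sph n)) : Prop :=
  Measurable ρ ∧ ∀ γ ∈ Γ,
    1 ≤ ∫⁻ t in Set.Icc (0 : ℝ) 1, ρ (γ t) * ENNReal.ofReal ‖deriv (fun s => (γ s : Ep n)) t‖

/-- Conformal modulus of a family of curves in `Sⁿ`. -/
def sphMod (n : ℕ) (Γ : Set (ℝ → Sph n)) : ℝ≥0∞ :=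
  ⨅ ρ ∈ {ρ | SphAdmissible n ρ Γ}, ∫⁻ θ, ρ θ ^ n ∂sphereVol n

/-- The family of curves joining the two boundary components of the round annulus
of center `θ` and radii `r < R` inside the annulus. -/
def annulusCurves (n : ℕ) (θ : Sph n) (r R : ℝ) : Set (ℝ → Sph n) :=
  {γ | ContinuousOn γ (Set.Icc 0 1) ∧
    (∀ t ∈ Set.Ioo (0 : ℝ) 1, r < sphDist n θ (γ t) ∧ sphDist n θ (γ t) < R) ∧
    sphDist n θ (γ 0) = r ∧ sphDist n θ (γ 1) = R}

/-- Conformal modulus of a round annulus in `Sⁿ`. -/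
def annulusMod (n : ℕ) (θ : Sph n) (r R : ℝ) : ℝ≥0∞ := sphMod n (annulusCurves n θ r R)

/-- The center of the boundary of the dome of the round ball of center `θ` and
radius `r`: the intersection of `∂Dome(B)` with the geodesic `[o,θ]`; in the Klein
model this is the point `cos r · θ`. -/
def domeCenter (n : ℕ) (θ : Sph n) (r : ℝ) : Ep n := Real.cos r • (θ : Ep n)

/-- The point `exp_x(R v_θ)` at hyperbolic distance `R` from `x` along the geodesic
ray from `x` towards the boundary point `θ` (a straight segment in the Klein model);
unit tangent vectors at `x` are identified with their boundary endpoints. -/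
def geoPoint (n : ℕ) (x : Ep n) (θ : Sph n) (R : ℝ) : Ep n :=
  Classical.epsilon fun y =>
    (∃ s ∈ Set.Ico (0 : ℝ) 1, y = x + s • ((θ : Ep n) - x)) ∧ hypDist n x y = R

/-- Operator norm, with respect to the hyperbolic metric at `x` (source) and `y`
(target), of a linear map between the corresponding tangent spaces. -/
def hypOpNorm (n : ℕ) (x y : Ep n) (T : Ep n →L[ℝ] Ep n) : ℝ :=
  sSup {r | ∃ u, qf n x u = 1 ∧ r = Real.sqrt (qf n y (T u))}

/-- Hyperbolic operator norm of a second derivative (a bilinear map). -/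
def hypOpNorm2 (n : ℕ) (x y : Ep n) (T : Ep n →L[ℝ] Ep n →L[ℝ] Ep n) : ℝ :=
  sSup {r | ∃ u v, qf n x u = 1 ∧ qf n x v = 1 ∧ r = Real.sqrt (qf n y (T u v))}

/-!
Take `a`, `b` in `B`, and write `α = 1 - ⟪x, a⟫`, `β = 1 - ⟪x, b⟫`, `c = 1 - ⟪a, b⟫`,
`s = 1 - ‖x‖²` in the Klein model. The visual angle `φ` at `x` between `a` and `b` satisfies
`1 - cos φ = s c / (α β)`, while the point `z` of the chord `[a, b]` closest to `x` satisfies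
`cosh² d(x, z) = 2 α β / (s c)`; that is, `sin (φ / 2) · cosh d(x, z) = 1`. Since `z` lies in the
dome, `d(x, z) ≥ 1`, so `1 - cos φ ≤ 2 / cosh² 1 < 1`, and `φ` is bounded by
`arccos (1 - 2 / cosh² 1) < π / 2` uniformly in `a`, `b`.
-/

lemma cosh_le_of_le_arcosh {a t : ℝ} (ha : 0 ≤ a) (ht : 0 < t) (h : a ≤ arcosh t) :
    Real.cosh a ≤ t := by
  have h' : a ≤ Real.arcosh t := h
  rwa [← Real.arcosh_le_arcosh (Real.cosh_pos a) ht, Real.arcosh_cosh ha]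

lemma two_lt_cosh_one_sq : 2 < Real.cosh 1 ^ 2 := by
  have := Real.self_lt_sinh_iff.2 one_pos
  rw [Real.cosh_sq]
  nlinarith

lemma arccos_one_sub_two_div_cosh_one_sq_lt_pi_div_two :
    Real.arccos (1 - 2 / Real.cosh 1 ^ 2) < Real.pi / 2 := by
  have hpos : 0 < 2 / Real.cosh 1 ^ 2 := by positivity
  have hlt : 2 / Real.cosh 1 ^ 2 < 1 := (div_lt_one (by positivity)).2 two_lt_cosh_one_sq
  rw [← Real.arccos_zero]
  exact Real.strictAntiOn_arccos ⟨by norm_num, by norm_num⟩ ⟨by linarith, by linarith⟩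
    (by linarith)

section Chord

variable {E : Type*} [NormedAddCommGroup E] [InnerProductSpace ℝ E] {x a b : E}

lemma one_sub_inner_pos_of_norm_lt_one (hx : ‖x‖ < 1) (ha : ‖a‖ = 1) : 0 < 1 - ⟪x, a⟫ := by
  have := real_inner_le_norm x a
  rw [ha, mul_one] at this
  linarith

lemma one_sub_inner_nonneg_of_norm_eq_one (ha : ‖a‖ = 1) (hb : ‖b‖ = 1) : 0 ≤ 1 - ⟪a, b⟫ := by
  have := real_inner_le_norm a b
  rw [ha, hb, mul_one] at this
  linarith

/-- For unit `a`, `b`, the point of the chord `[a, b]` hyperbolically nearest to `x`: its weights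
minimize `(1 - ⟪x, z⟫)² / (1 - ‖z‖²)`, which is `cosh² d(x, z)` up to a constant factor. -/
def chordPoint (x a b : E) : E :=
  ((1 - ⟪x, b⟫) / ((1 - ⟪x, a⟫) + (1 - ⟪x, b⟫))) • a +
    ((1 - ⟪x, a⟫) / ((1 - ⟪x, a⟫) + (1 - ⟪x, b⟫))) • b

lemma chordPoint_mem_segment (ha : 0 < 1 - ⟪x, a⟫) (hb : 0 < 1 - ⟪x, b⟫) :
    chordPoint x a b ∈ segment ℝ a b :=
  ⟨_, _, by positivity, by positivity, by field_simp; ring, rfl⟩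

lemma one_sub_inner_chordPoint (h : (1 - ⟪x, a⟫) + (1 - ⟪x, b⟫) ≠ 0) :
    1 - ⟪x, chordPoint x a b⟫ =
      2 * (1 - ⟪x, a⟫) * (1 - ⟪x, b⟫) / ((1 - ⟪x, a⟫) + (1 - ⟪x, b⟫)) := by
  simp only [chordPoint, inner_add_right, real_inner_smul_right]
  field_simp
  ring

lemma one_sub_norm_chordPoint_sq (ha : ‖a‖ = 1) (hb : ‖b‖ = 1)
    (h : (1 - ⟪x, a⟫) + (1 - ⟪x, b⟫) ≠ 0) :
    1 - ‖chordPoint x a b‖ ^ 2 =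
      2 * (1 - ⟪x, a⟫) * (1 - ⟪x, b⟫) * (1 - ⟪a, b⟫) / ((1 - ⟪x, a⟫) + (1 - ⟪x, b⟫)) ^ 2 := by
  have haa : ⟪a, a⟫ = 1 := by rw [real_inner_self_eq_norm_sq, ha, one_pow]
  have hbb : ⟪b, b⟫ = 1 := by rw [real_inner_self_eq_norm_sq, hb, one_pow]
  rw [← real_inner_self_eq_norm_sq]
  simp only [chordPoint, inner_add_left, inner_add_right, real_inner_smul_left,
    real_inner_smul_right, haa, hbb, real_inner_comm a b]
  field_simp
  ring

end Chord

lemma kbil_sub_sub (n : ℕ) (x u v : Ep n) :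
    kbil n x (u - x) (v - x) =
      (1 - ⟪x, u⟫) * (1 - ⟪x, v⟫) - (1 - ‖x‖ ^ 2) * (1 - ⟪u, v⟫) := by
  simp only [kbil, inner_sub_left, inner_sub_right, real_inner_self_eq_norm_sq,
    real_inner_comm u x, real_inner_comm v x]
  ring

lemma visualDist_eq_arccos {n : ℕ} {x : Ep n} (hx : ‖x‖ < 1) (a b : Sph n) :
    visualDist n x a b = Real.arccos (1 - (1 - ‖x‖ ^ 2) * (1 - ⟪(a : Ep n), b⟫) /
      ((1 - ⟪x, (a : Ep n)⟫) * (1 - ⟪x, (b : Ep n)⟫))) := by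
  have ha : ‖(a : Ep n)‖ = 1 := norm_eq_of_mem_sphere a
  have hb : ‖(b : Ep n)‖ = 1 := norm_eq_of_mem_sphere b
  have hα := one_sub_inner_pos_of_norm_lt_one hx ha
  have hβ := one_sub_inner_pos_of_norm_lt_one hx hb
  have hsq (u : Ep n) (hu : ‖u‖ = 1) : kbil n x (u - x) (u - x) = (1 - ⟪x, u⟫) ^ 2 := by
    rw [kbil_sub_sub, real_inner_self_eq_norm_sq, hu]
    ring
  rw [visualDist, kbil_sub_sub, hsq _ ha, hsq _ hb, Real.sqrt_sq hα.le, Real.sqrt_sq hβ.le]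
  congr 1
  field_simp

lemma hypDist_chordPoint {n : ℕ} {x a b : Ep n} (hx : ‖x‖ < 1) (ha : ‖a‖ = 1) (hb : ‖b‖ = 1)
    (hab : 0 < 1 - ⟪a, b⟫) :
    hypDist n x (chordPoint x a b) = arcosh (√(2 * (1 - ⟪x, a⟫) * (1 - ⟪x, b⟫) /
      ((1 - ‖x‖ ^ 2) * (1 - ⟪a, b⟫)))) := by
  have hα := one_sub_inner_pos_of_norm_lt_one hx ha
  have hβ := one_sub_inner_pos_of_norm_lt_one hx hb
  have hs : 0 < 1 - ‖x‖ ^ 2 := by nlinarith [norm_nonneg x]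
  rw [hypDist, one_sub_inner_chordPoint (by positivity),
    one_sub_norm_chordPoint_sq ha hb (by positivity)]
  congr 1
  rw [eq_comm, Real.sqrt_eq_iff_eq_sq (by positivity) (by positivity), div_pow,
    Real.sq_sqrt (by positivity)]
  field_simp

lemma cosh_one_sq_mul_le {n : ℕ} {x a b : Ep n} (hx : ‖x‖ < 1) (ha : ‖a‖ = 1) (hb : ‖b‖ = 1)
    (hfar : ∀ z ∈ segment ℝ a b, ‖z‖ < 1 → 1 ≤ hypDist n x z) :
    Real.cosh 1 ^ 2 * ((1 - ‖x‖ ^ 2) * (1 - ⟪a, b⟫)) ≤ 2 * (1 - ⟪x, a⟫) * (1 - ⟪x, b⟫) := by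
  have hα := one_sub_inner_pos_of_norm_lt_one hx ha
  have hβ := one_sub_inner_pos_of_norm_lt_one hx hb
  have hs : 0 < 1 - ‖x‖ ^ 2 := by nlinarith [norm_nonneg x]
  rcases (one_sub_inner_nonneg_of_norm_eq_one ha hb).eq_or_lt with hab | hab
  · rw [← hab]
    nlinarith [mul_pos hα hβ]
  have hz : ‖chordPoint x a b‖ < 1 := by
    have := one_sub_norm_chordPoint_sq ha hb (x := x) (by positivity)
    have : 0 < 1 - ‖chordPoint x a b‖ ^ 2 := by rw [this]; positivity
    nlinarith [norm_nonneg (chordPoint x a b)]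
  have hdist := hfar _ (chordPoint_mem_segment hα hβ) hz
  rw [hypDist_chordPoint hx ha hb hab] at hdist
  have hcosh := cosh_le_of_le_arcosh zero_le_one (by positivity) hdist
  have := pow_le_pow_left₀ (Real.cosh_pos 1).le hcosh 2
  rwa [Real.sq_sqrt (by positivity), le_div_iff₀ (by positivity)] at this

lemma visualDist_le_of_one_le_hypDist {n : ℕ} {x : Ep n} (hx : ‖x‖ < 1) (a b : Sph n)
    (hfar : ∀ z ∈ segment ℝ (a : Ep n) b, ‖z‖ < 1 → 1 ≤ hypDist n x z) :
    visualDist n x a b ≤ Real.arccos (1 - 2 / Real.cosh 1 ^ 2) := by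
  have ha : ‖(a : Ep n)‖ = 1 := norm_eq_of_mem_sphere a
  have hb : ‖(b : Ep n)‖ = 1 := norm_eq_of_mem_sphere b
  have hαβ := mul_pos (one_sub_inner_pos_of_norm_lt_one hx ha)
    (one_sub_inner_pos_of_norm_lt_one hx hb)
  have key := cosh_one_sq_mul_le hx ha hb hfar
  rw [visualDist_eq_arccos hx]
  refine Real.arccos_le_arccos ?_
  rw [sub_le_sub_iff_left, div_le_div_iff₀ hαβ (by positivity)]
  linarith

lemma visualDiam_le_of_one_le_hypDist {n : ℕ} {x : Ep n} (hx : ‖x‖ < 1) (B : Set (Sph n))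
    (hfar : ∀ z ∈ dome n (sphSet n B), 1 ≤ hypDist n x z) :
    visualDiam n x B ≤ Real.arccos (1 - 2 / Real.cosh 1 ^ 2) := by
  refine Real.sSup_le ?_ (Real.arccos_nonneg _)
  rintro _ ⟨a, ha, b, hb, rfl⟩
  refine visualDist_le_of_one_le_hypDist hx a b fun z hz hz1 =>
    hfar z ⟨?_, mem_ball_zero_iff.2 hz1⟩
  exact segment_subset_convexHull (mem_image_of_mem _ ha) (mem_image_of_mem _ hb) hz

theorem statement5_general (n : ℕ) (x : Ep n) (hx : x ∈ ball (0 : Ep n) 1)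
    (θ : Sph n) (r : ℝ)
    (hfar : ∀ z ∈ dome n (sphSet n (roundBall n θ r)), 1 ≤ hypDist n x z) :
    visualDiam n x (roundBall n θ r) < Real.pi / 2 :=
  (visualDiam_le_of_one_le_hypDist (mem_ball_zero_iff.1 hx) _ hfar).trans_lt
    arccos_one_sub_two_div_cosh_one_sq_lt_pi_div_two

/-- If `x ∈ ℍ^{n+1}` is at hyperbolic distance at least `1` from
the dome of a round ball `B ⊂ Sⁿ`, then the visual diameter of `B` seen from `x`
is less than `π/2`. -/
theorem statement5 (n : ℕ) (x : Ep n) (hx : x ∈ ball (0 : Ep n) 1)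
    (θ : Sph n) (r : ℝ) (hr : 0 < r)
    (hfar : ∀ z ∈ dome n (sphSet n (roundBall n θ r)), 1 ≤ hypDist n x z) :
    visualDiam n x (roundBall n θ r) < Real.pi / 2 :=
  statement5_general n x hx θ r hfar

end
end

section
/- Let (f_m) be a sequence of η-quasisymmetric covering maps S¹ → S¹ of degree at most d. Then there is a subsequence converging uniformly to an η-quasisymmetric covering map f : S¹ → S¹ of degree at most d. -/
open scoped NNReal
open Filter

noncomputable section

/-- `h` is an `η`-quasisymmetric homeomorphism of the circle `S¹`, for a
homeomorphism `η` of `[0,∞)`. -/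
def IsQSHomeo (η : ℝ≥0 ≃ₜ ℝ≥0) (h : Circle → Circle) : Prop :=
  IsHomeomorph h ∧ ∀ x y z : Circle, x ≠ y → y ≠ z → x ≠ z →
    nndist (h x) (h y) / nndist (h x) (h z) ≤ η (nndist x y / nndist x z)

/-- `f : S¹ → S¹` is an `η`-quasisymmetric covering of degree `d`: the covering
`z ↦ z^d` post-composing an `η`-quasisymmetric homeomorphism. -/
def IsQSCovering (η : ℝ≥0 ≃ₜ ℝ≥0) (d : ℕ) (f : Circle → Circle) : Prop :=
  ∃ h : Circle → Circle, IsQSHomeo η h ∧ f = fun z => (h z) ^ d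

/-!
Quasisymmetry with a fixed `η` controls distances in both directions, uniformly in `h`.
Comparing `y` with the antipode `-x` bounds `d(h x, h y)` by the modulus
`max (2 η(t/2)) t` of `t = d(x, y)`; comparing `z` with the preimage of the antipode of `h x`
bounds `d(h x, h z)` from below by a positive constant depending only on `d(x, z)`.
The upper bound makes the homeomorphisms equicontinuous, so Arzelà–Ascoli yields a uniformly
convergent subsequence. The lower bound makes the limit injective, uniform convergence of
surjections onto a compact space makes it surjective, and the quasisymmetry inequality passes to
the limit. The degrees take finitely many values, so one of them recurs along a subsequence, and
`z ↦ z ^ k` is uniformly continuous.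
-/

open Topology

theorem nndist_pos_of_ne {X : Type*} [MetricSpace X] {x y : X} (h : x ≠ y) : 0 < nndist x y :=
  pos_iff_ne_zero.mpr (mt nndist_eq_zero.mp h)

theorem Finite.exists_strictMono_subseq_const {α : Type*} [Finite α] (k : ℕ → α) :
    ∃ a : α, ∃ φ : ℕ → ℕ, StrictMono φ ∧ ∀ n, k (φ n) = a := by
  obtain ⟨a, ha⟩ := Finite.exists_infinite_fiber k
  obtain ⟨φ, hφ, hka⟩ := extraction_of_frequently_atTop
    (Nat.frequently_atTop_iff_infinite.mpr (Set.infinite_coe_iff.mp ha))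
  exact ⟨a, φ, hφ, hka⟩

namespace NNReal

theorem strictMono_homeomorph (η : ℝ≥0 ≃ₜ ℝ≥0) : StrictMono η := by
  refine (η.continuous.strictMono_of_inj η.injective).resolve_right fun hanti => ?_
  obtain ⟨t, ht⟩ := η.surjective (η 0 + 1)
  have := hanti.antitone (zero_le : 0 ≤ t)
  rw [ht] at this
  exact (lt_add_one (η 0)).not_ge this

theorem homeomorph_zero (η : ℝ≥0 ≃ₜ ℝ≥0) : η 0 = 0 := by
  obtain ⟨t, ht⟩ := η.surjective 0
  have := (strictMono_homeomorph η).monotone (zero_le : 0 ≤ t)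
  rw [ht] at this
  exact le_antisymm this zero_le

theorem homeomorph_pos (η : ℝ≥0 ≃ₜ ℝ≥0) {t : ℝ≥0} (ht : 0 < t) : 0 < η t :=
  homeomorph_zero η ▸ strictMono_homeomorph η ht

end NNReal

namespace Circle

theorem nndist_le_two (x y : Circle) : nndist x y ≤ 2 := by
  rw [← NNReal.coe_le_coe, coe_nndist]
  calc dist x y = ‖(x : ℂ) - y‖ := Complex.dist_eq _ _
    _ ≤ ‖(x : ℂ)‖ + ‖(y : ℂ)‖ := norm_sub_le _ _
    _ = 2 := by rw [norm_coe, norm_coe]; norm_num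

theorem nndist_neg_self (x : Circle) : nndist x (-x) = 2 := by
  rw [← NNReal.coe_inj, coe_nndist]
  calc dist x (-x) = ‖(x : ℂ) - -x‖ := Complex.dist_eq _ _
    _ = 2 := by rw [sub_neg_eq_add, ← two_mul, norm_mul, norm_coe]; norm_num

end Circle

theorem Function.Surjective.of_tendstoUniformly {ι X Y : Type*} [TopologicalSpace X]
    [CompactSpace X] [UniformSpace Y] [T2Space Y] {l : Filter ι} [l.NeBot] {F : ι → X → Y}
    {g : X → Y} (hF : ∀ i, Function.Surjective (F i)) (hg : Continuous g)
    (hlim : TendstoUniformly F g l) : Function.Surjective g := by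
  intro y
  suffices y ∈ closure (Set.range g) by rwa [(isCompact_range hg).isClosed.closure_eq] at this
  refine UniformSpace.mem_closure_iff_ball.mpr fun {V} hV => ?_
  obtain ⟨i, hi⟩ := (hlim _ (symm_le_uniformity hV)).exists
  obtain ⟨x, rfl⟩ := hF i y
  exact ⟨g x, hi x, x, rfl⟩

theorem Metric.equicontinuous_of_nndist_le {ι X Y : Type*} [PseudoMetricSpace X]
    [PseudoMetricSpace Y] {ω : ℝ≥0 → ℝ≥0} (hω : Tendsto ω (𝓝 0) (𝓝 0)) (F : ι → X → Y)
    (hF : ∀ i x y, nndist (F i x) (F i y) ≤ ω (nndist x y)) : Equicontinuous F := by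
  have h0 : Tendsto Real.toNNReal (𝓝 0) (𝓝 0) :=
    continuous_real_toNNReal.tendsto' 0 0 Real.toNNReal_zero
  refine Metric.equicontinuous_of_continuity_modulus (fun t => ω t.toNNReal)
    (NNReal.tendsto_coe.mpr (hω.comp h0)) F fun x y i => ?_
  rw [dist_nndist, dist_nndist, Real.toNNReal_coe]
  exact_mod_cast hF i x y

theorem exists_subseq_tendstoUniformly_of_modulus {X Y : Type*} [PseudoMetricSpace X]
    [CompactSpace X] [MetricSpace Y] [CompactSpace Y] {ω : ℝ≥0 → ℝ≥0}
    (hω : Tendsto ω (𝓝 0) (𝓝 0)) (u : ℕ → X → Y)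
    (hu : ∀ n x y, nndist (u n x) (u n y) ≤ ω (nndist x y)) :
    ∃ (g : C(X, Y)) (ψ : ℕ → ℕ), StrictMono ψ ∧ TendstoUniformly (fun n => u (ψ n)) g atTop := by
  let S : Set (X → Y) := {v | ∀ x y, nndist (v x) (v y) ≤ ω (nndist x y)}
  have hS : IsClosed S := by
    simp only [S, Set.ofPred_forall]
    exact isClosed_iInter fun x => isClosed_iInter fun y =>
      isClosed_le (by fun_prop) continuous_const
  have hS_continuous : ∀ v ∈ S, Continuous v := fun v hv =>
    (Metric.equicontinuous_of_nndist_le hω (fun _ : Unit => v) fun _ => hv).continuous ()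
  let T : Set C(X, Y) := {v | ⇑v ∈ S}
  have hT : IsCompact T := by
    refine ArzelaAscoli.isCompact_of_equicontinuous T ?_
      (Metric.equicontinuous_of_nndist_le hω _ fun v : T => v.2)
    convert hS.isCompact
    refine Set.Subset.antisymm (Set.image_subset_iff.mpr fun v hv => hv) fun v hv => ?_
    exact ⟨⟨v, hS_continuous v hv⟩, hv, rfl⟩
  let U : ℕ → C(X, Y) := fun n => ⟨u n, hS_continuous _ (hu n)⟩
  obtain ⟨g, -, ψ, hψ, hlim⟩ := hT.tendsto_subseq (x := U) hu
  exact ⟨g, ψ, hψ, ContinuousMap.tendsto_iff_tendstoUniformly.mp hlim⟩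

namespace IsQSHomeo

variable {η : ℝ≥0 ≃ₜ ℝ≥0} {h : Circle → Circle}

theorem le_mul_nndist (hh : IsQSHomeo η h) {x y z : Circle} (hxy : x ≠ y) (hyz : y ≠ z)
    (hxz : x ≠ z) :
    nndist (h x) (h y) ≤ η (nndist x y / nndist x z) * nndist (h x) (h z) := by
  have hpos : 0 < nndist (h x) (h z) := nndist_pos_of_ne (hh.1.injective.ne hxz)
  exact (div_le_iff₀ hpos).mp (hh.2 x y z hxy hyz hxz)

theorem nndist_le (hh : IsQSHomeo η h) (x y : Circle) :
    nndist (h x) (h y) ≤ max (2 * η (nndist x y / 2)) (nndist x y) := by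
  rcases eq_or_ne x y with rfl | hxy
  · simp
  rcases eq_or_ne y (-x) with rfl | hyx
  · rw [Circle.nndist_neg_self]
    exact (Circle.nndist_le_two _ _).trans (le_max_right _ _)
  calc nndist (h x) (h y) ≤ η (nndist x y / nndist x (-x)) * nndist (h x) (h (-x)) :=
        hh.le_mul_nndist hxy hyx (Circle.neg_ne_self x).symm
    _ ≤ η (nndist x y / 2) * 2 := by
        rw [Circle.nndist_neg_self]
        gcongr
        exact Circle.nndist_le_two _ _
    _ ≤ max (2 * η (nndist x y / 2)) (nndist x y) := by rw [mul_comm]; exact le_max_left _ _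

theorem min_le_nndist (hh : IsQSHomeo η h) {x z : Circle} (hxz : x ≠ z) :
    min 2 (2 / η (2 / nndist x z)) ≤ nndist (h x) (h z) := by
  obtain ⟨y, hy⟩ := hh.1.surjective (-h x)
  rcases eq_or_ne (h z) (-h x) with hz | hz
  · rw [hz, Circle.nndist_neg_self]
    exact min_le_left _ _
  have hxy : x ≠ y := by rintro rfl; exact Circle.neg_ne_self _ hy.symm
  have hyz : y ≠ z := fun e => hz (e ▸ hy)
  have hη : 0 < η (2 / nndist x z) :=
    NNReal.homeomorph_pos η (div_pos two_pos (nndist_pos_of_ne hxz))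
  refine min_le_of_right_le ((div_le_iff₀' hη).mpr ?_)
  calc (2 : ℝ≥0) = nndist (h x) (h y) := by rw [hy, Circle.nndist_neg_self]
    _ ≤ η (nndist x y / nndist x z) * nndist (h x) (h z) := hh.le_mul_nndist hxy hyz hxz
    _ ≤ η (2 / nndist x z) * nndist (h x) (h z) := by
        gcongr
        exact (NNReal.strictMono_homeomorph η).monotone
          (div_le_div_of_nonneg_right (Circle.nndist_le_two x y) zero_le)

theorem of_tendstoUniformly {ι : Type*} {l : Filter ι} [l.NeBot] {h : ι → Circle → Circle}
    {g : Circle → Circle} (hh : ∀ i, IsQSHomeo η (h i)) (hlim : TendstoUniformly h g l) :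
    IsQSHomeo η g := by
  have hcont : Continuous g := hlim.continuous (Frequently.of_forall fun i => (hh i).1.continuous)
  have hpt := hlim.tendsto_at
  have hinj : Function.Injective g := by
    intro x z hxz
    by_contra hne
    have hd : 0 < nndist x z := nndist_pos_of_ne hne
    have hmin : 0 < min 2 (2 / η (2 / nndist x z)) :=
      lt_min two_pos (div_pos two_pos (NNReal.homeomorph_pos η (div_pos two_pos hd)))
    have hge : min 2 (2 / η (2 / nndist x z)) ≤ nndist (g x) (g z) :=
      ge_of_tendsto ((hpt x).nndist (hpt z)) (Eventually.of_forall fun i => (hh i).min_le_nndist hne)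
    rw [hxz, nndist_self] at hge
    exact hmin.not_ge hge
  have hsurj := Function.Surjective.of_tendstoUniformly (fun i => (hh i).1.surjective) hcont hlim
  refine ⟨isHomeomorph_iff_continuous_bijective.mpr ⟨hcont, hinj, hsurj⟩,
    fun x y z hxy hyz hxz => ?_⟩
  rw [div_le_iff₀ (nndist_pos_of_ne (hinj.ne hxz))]
  exact le_of_tendsto_of_tendsto' ((hpt x).nndist (hpt y)) (((hpt x).nndist (hpt z)).const_mul _)
    fun i => (hh i).le_mul_nndist hxy hyz hxz

theorem exists_subseq_tendstoUniformly (h : ℕ → Circle → Circle) (hh : ∀ n, IsQSHomeo η (h n)) :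
    ∃ (ψ : ℕ → ℕ) (g : Circle → Circle), StrictMono ψ ∧ IsQSHomeo η g ∧
      TendstoUniformly (fun n => h (ψ n)) g atTop := by
  have hω : Tendsto (fun t => max (2 * η (t / 2)) t) (𝓝 0) (𝓝 0) := by
    have : Continuous (fun t => max (2 * η (t / 2)) t) := by fun_prop
    simpa [NNReal.homeomorph_zero] using this.tendsto 0
  obtain ⟨g, ψ, hψ, hlim⟩ :=
    exists_subseq_tendstoUniformly_of_modulus hω h fun n => (hh n).nndist_le
  exact ⟨ψ, g, hψ, of_tendstoUniformly (fun n => hh (ψ n)) hlim, hlim⟩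

end IsQSHomeo

/-- A sequence of `η`-quasisymmetric covering maps `S¹ → S¹` of
degree at most `d` has a subsequence converging uniformly to an
`η`-quasisymmetric covering map of degree at most `d`. -/
theorem statement9 (η : ℝ≥0 ≃ₜ ℝ≥0) (d : ℕ) (f : ℕ → Circle → Circle)
    (hf : ∀ m, ∃ k ≤ d, IsQSCovering η k (f m)) :
    ∃ (φ : ℕ → ℕ) (g : Circle → Circle), StrictMono φ ∧
      (∃ k ≤ d, IsQSCovering η k g) ∧
      TendstoUniformly (fun j => f (φ j)) g atTop := by
  choose k hkd h hh hfh using hf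
  obtain ⟨⟨K, hKd⟩, φ, hφ, hkφ⟩ :=
    Finite.exists_strictMono_subseq_const fun m => (⟨k m, hkd m⟩ : Set.Iic d)
  obtain ⟨ψ, g, hψ, hg, hlim⟩ :=
    IsQSHomeo.exists_subseq_tendstoUniformly (fun n => h (φ n)) fun n => hh (φ n)
  refine ⟨fun n => φ (ψ n), fun z => g z ^ K, hφ.comp hψ, ⟨K, hKd, g, hg, rfl⟩, ?_⟩
  have hpow : UniformContinuous fun z : Circle => z ^ K :=
    CompactSpace.uniformContinuous_of_continuous (continuous_pow K)
  have hfφ : (fun n => f (φ (ψ n))) = fun n => (fun z => z ^ K) ∘ h (φ (ψ n)) := by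
    funext n
    rw [hfh, show k (φ (ψ n)) = K from congrArg Subtype.val (hkφ (ψ n))]
    rfl
  rw [hfφ]
  exact hpow.comp_tendstoUniformly hlim

end
end
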